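/- Let x, y : [s,t] → ℝ be functions and let p ≥ 1. Then the p-variation of the pointwise product xy satisfies ‖xy‖_{p-var;[s,t]} ≤ ‖x‖_{p-var;[s,t]} · ‖y‖_{∞;[s,t]} + ‖y‖_{p-var;[s,t]} · ‖x‖_{∞;[s,t]}, where ‖·‖_{∞;[s,t]} is the supremum norm and ‖g‖_{p-var;[s,t]} = (sup_π Σ_{[t_i,t_{i+1}]∈π} |g(t_{i+1}) − g(t_i)|^p)^{1/p}, the supremum being over all finite partitions π of [s,t]. -/

import Mathlib

/-- `u` is a partition of `[s,t]` into `n` subintervals. -/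
def IsPart (s t : ℝ) (n : ℕ) (u : ℕ → ℝ) : Prop :=
  u 0 = s ∧ u n = t ∧ ∀ i, i < n → u i ≤ u (i + 1)

/-- The set of `p`-variation partition sums of `g` over `[s,t]`. -/
def pvarSet (p s t : ℝ) (g : ℝ → ℝ) : Set ℝ :=
  {v | ∃ n u, IsPart s t n u ∧ v = ∑ i ∈ Finset.range n, |g (u (i + 1)) - g (u i)| ^ p}

/-- The `p`-variation seminorm of `g` on `[s,t]`. -/
noncomputable def pVar (p s t : ℝ) (g : ℝ → ℝ) : ℝ := sSup (pvarSet p s t g) ^ (1 / p)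

/-- The supremum norm of `g` on `[s,t]`. -/
noncomputable def supNorm (s t : ℝ) (g : ℝ → ℝ) : ℝ :=
  sSup ((fun r => |g r|) '' Set.Icc s t)

/-!
On each interval of a partition, `Δ(xy) = Δx · y(t_{i+1}) + x(t_i) · Δy`, so
`|Δ(xy)| ≤ |Δx| ‖y‖_∞ + |Δy| ‖x‖_∞`. Minkowski's inequality in `ℓ^p` (this is where `p ≥ 1`
enters) bounds the `p`-th root of the partition sum of `xy` by the sum of those of `x` and `y`,
scaled by the sup norms, and taking the supremum over partitions gives the claim.
-/

open Finset

lemma abs_mul_sub_mul_le (a a' b b' : ℝ) :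
    |a' * b' - a * b| ≤ |a' - a| * |b'| + |b' - b| * |a| :=
  calc |a' * b' - a * b| = |(a' - a) * b' + a * (b' - b)| := by ring_nf
    _ ≤ |(a' - a) * b'| + |a * (b' - b)| := abs_add_le _ _
    _ = |a' - a| * |b'| + |b' - b| * |a| := by rw [abs_mul, abs_mul, mul_comm |a|]

lemma rpow_sum_rpow_mul_const {ι : Type*} (S : Finset ι) {p c : ℝ} (hp : p ≠ 0) (hc : 0 ≤ c)
    {a : ι → ℝ} (ha : ∀ i ∈ S, 0 ≤ a i) :
    (∑ i ∈ S, (a i * c) ^ p) ^ (1 / p) = (∑ i ∈ S, a i ^ p) ^ (1 / p) * c := by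
  have hsum : ∑ i ∈ S, (a i * c) ^ p = (∑ i ∈ S, a i ^ p) * c ^ p := by
    rw [sum_mul]
    exact sum_congr rfl fun i hi => Real.mul_rpow (ha i hi) hc
  rw [hsum, Real.mul_rpow (sum_nonneg fun i hi => Real.rpow_nonneg (ha i hi) _)
    (Real.rpow_nonneg hc _), one_div, Real.rpow_rpow_inv hc hp]

lemma rpow_sum_abs_sub_mul_le {p A B : ℝ} (hp : 1 ≤ p) {n : ℕ} {f g : ℕ → ℝ}
    (hf : ∀ i ≤ n, |f i| ≤ A) (hg : ∀ i ≤ n, |g i| ≤ B) :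
    (∑ i ∈ range n, |f (i + 1) * g (i + 1) - f i * g i| ^ p) ^ (1 / p) ≤
      (∑ i ∈ range n, |f (i + 1) - f i| ^ p) ^ (1 / p) * B +
        (∑ i ∈ range n, |g (i + 1) - g i| ^ p) ^ (1 / p) * A := by
  have hp0 : 0 < p := one_pos.trans_le hp
  have hA : 0 ≤ A := (abs_nonneg _).trans (hf 0 n.zero_le)
  have hB : 0 ≤ B := (abs_nonneg _).trans (hg 0 n.zero_le)
  have hpointwise : ∀ i ∈ range n, |f (i + 1) * g (i + 1) - f i * g i| ^ p ≤
      (|f (i + 1) - f i| * B + |g (i + 1) - g i| * A) ^ p := by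
    intro i hi
    have hi : i < n := mem_range.mp hi
    refine Real.rpow_le_rpow (abs_nonneg _) ((abs_mul_sub_mul_le _ _ _ _).trans ?_) hp0.le
    gcongr
    exacts [hg _ hi, hf _ hi.le]
  calc (∑ i ∈ range n, |f (i + 1) * g (i + 1) - f i * g i| ^ p) ^ (1 / p)
      ≤ (∑ i ∈ range n, (|f (i + 1) - f i| * B + |g (i + 1) - g i| * A) ^ p) ^ (1 / p) :=
        Real.rpow_le_rpow (sum_nonneg fun i _ => Real.rpow_nonneg (abs_nonneg _) _)
          (sum_le_sum hpointwise) (by positivity)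
    _ ≤ (∑ i ∈ range n, (|f (i + 1) - f i| * B) ^ p) ^ (1 / p) +
          (∑ i ∈ range n, (|g (i + 1) - g i| * A) ^ p) ^ (1 / p) :=
        Real.Lp_add_le_of_nonneg _ hp (fun i _ => by positivity) (fun i _ => by positivity)
    _ = _ := by
        rw [rpow_sum_rpow_mul_const _ hp0.ne' hB fun i _ => abs_nonneg _,
          rpow_sum_rpow_mul_const _ hp0.ne' hA fun i _ => abs_nonneg _]

lemma IsPart.mem_Icc {s t : ℝ} {n : ℕ} {u : ℕ → ℝ} (hu : IsPart s t n u) {i : ℕ}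
    (hi : i ≤ n) : u i ∈ Set.Icc s t := by
  obtain ⟨h0, hn, hstep⟩ := hu
  have hmono : Monotone fun j => u (min j n) := by
    refine monotone_nat_of_le_succ fun j => ?_
    rcases lt_or_ge j n with hj | hj
    · simpa [min_eq_left hj.le, min_eq_left (Nat.succ_le_of_lt hj)] using hstep j hj
    · simp [min_eq_right hj, min_eq_right (hj.trans j.le_succ)]
  constructor
  · simpa [h0, min_eq_left hi] using hmono i.zero_le
  · simpa [min_eq_left hi, hn] using hmono hi

lemma abs_le_supNorm {s t : ℝ} {g : ℝ → ℝ} (hg : BddAbove ((fun r => |g r|) '' Set.Icc s t))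
    {r : ℝ} (hr : r ∈ Set.Icc s t) : |g r| ≤ supNorm s t g :=
  le_csSup hg ⟨r, hr, rfl⟩

lemma supNorm_nonneg (s t : ℝ) (g : ℝ → ℝ) : 0 ≤ supNorm s t g :=
  Real.sSup_nonneg <| by rintro _ ⟨r, -, rfl⟩; exact abs_nonneg _

lemma sSup_pvarSet_nonneg (p s t : ℝ) (g : ℝ → ℝ) : 0 ≤ sSup (pvarSet p s t g) :=
  Real.sSup_nonneg <| by
    rintro _ ⟨n, u, -, rfl⟩; exact sum_nonneg fun i _ => Real.rpow_nonneg (abs_nonneg _) _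

lemma pVar_nonneg (p s t : ℝ) (g : ℝ → ℝ) : 0 ≤ pVar p s t g :=
  Real.rpow_nonneg (sSup_pvarSet_nonneg p s t g) _

lemma rpow_sum_le_pVar {p s t : ℝ} (hp : 0 < p) {g : ℝ → ℝ} (hg : BddAbove (pvarSet p s t g))
    {n : ℕ} {u : ℕ → ℝ} (hu : IsPart s t n u) :
    (∑ i ∈ range n, |g (u (i + 1)) - g (u i)| ^ p) ^ (1 / p) ≤ pVar p s t g :=
  Real.rpow_le_rpow (sum_nonneg fun i _ => Real.rpow_nonneg (abs_nonneg _) _)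
    (le_csSup hg ⟨n, u, hu, rfl⟩) (by positivity)

lemma pVar_le_of_forall_isPart {p s t R : ℝ} (hp : 0 < p) (hR : 0 ≤ R) {g : ℝ → ℝ}
    (h : ∀ n u, IsPart s t n u →
      (∑ i ∈ range n, |g (u (i + 1)) - g (u i)| ^ p) ^ (1 / p) ≤ R) :
    pVar p s t g ≤ R := by
  have hsup : sSup (pvarSet p s t g) ≤ R ^ p := by
    refine Real.sSup_le ?_ (Real.rpow_nonneg hR _)
    rintro _ ⟨n, u, hu, rfl⟩
    have hS : 0 ≤ ∑ i ∈ range n, |g (u (i + 1)) - g (u i)| ^ p :=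
      sum_nonneg fun i _ => Real.rpow_nonneg (abs_nonneg _) _
    rw [← Real.rpow_le_rpow_iff hS (Real.rpow_nonneg hR _) (one_div_pos.mpr hp),
      ← Real.rpow_mul hR, mul_one_div_cancel hp.ne', Real.rpow_one]
    exact h n u hu
  calc pVar p s t g ≤ (R ^ p) ^ (1 / p) :=
        Real.rpow_le_rpow (sSup_pvarSet_nonneg p s t g) hsup (by positivity)
    _ = R := by rw [one_div, Real.rpow_rpow_inv hR hp.ne']

theorem stmt3_general (s t p : ℝ) (hp : 1 ≤ p) (x y : ℝ → ℝ)
    (hx : BddAbove (pvarSet p s t x)) (hy : BddAbove (pvarSet p s t y))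
    (hxb : BddAbove ((fun r => |x r|) '' Set.Icc s t))
    (hyb : BddAbove ((fun r => |y r|) '' Set.Icc s t)) :
    pVar p s t (fun r => x r * y r) ≤
      pVar p s t x * supNorm s t y + pVar p s t y * supNorm s t x := by
  have hp0 : 0 < p := one_pos.trans_le hp
  have hR : 0 ≤ pVar p s t x * supNorm s t y + pVar p s t y * supNorm s t x :=
    add_nonneg (mul_nonneg (pVar_nonneg ..) (supNorm_nonneg ..))
      (mul_nonneg (pVar_nonneg ..) (supNorm_nonneg ..))
  refine pVar_le_of_forall_isPart hp0 hR fun n u hu => ?_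
  calc _ ≤ (∑ i ∈ range n, |x (u (i + 1)) - x (u i)| ^ p) ^ (1 / p) * supNorm s t y +
          (∑ i ∈ range n, |y (u (i + 1)) - y (u i)| ^ p) ^ (1 / p) * supNorm s t x :=
        rpow_sum_abs_sub_mul_le (f := x ∘ u) (g := y ∘ u) hp
          (fun i hi => abs_le_supNorm hxb (hu.mem_Icc hi))
          (fun i hi => abs_le_supNorm hyb (hu.mem_Icc hi))
    _ ≤ _ := by
        gcongr
        exacts [supNorm_nonneg s t y, rpow_sum_le_pVar hp0 hx hu, supNorm_nonneg s t x,
          rpow_sum_le_pVar hp0 hy hu]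

/-- the `p`-variation of a pointwise product satisfies the Leibniz-type bound. -/
theorem stmt3 (s t p : ℝ) (hst : s ≤ t) (hp : 1 ≤ p) (x y : ℝ → ℝ)
    (hx : BddAbove (pvarSet p s t x)) (hy : BddAbove (pvarSet p s t y))
    (hxb : BddAbove ((fun r => |x r|) '' Set.Icc s t))
    (hyb : BddAbove ((fun r => |y r|) '' Set.Icc s t)) :
    pVar p s t (fun r => x r * y r) ≤
      pVar p s t x * supNorm s t y + pVar p s t y * supNorm s t x :=
  stmt3_general s t p hp x y hx hy hxb hyb
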